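/- Let φ : ℕ → ℂ and define its even extension φ̃ : ℕ → ℂ by φ̃(2n) = φ(n) and φ̃(2n+1) = 0 for all n ∈ ℕ. Then φ belongs to the class 𝒞 if and only if φ̃ belongs to the class 𝒞′, and in that case ‖φ̃‖_{𝒞′} = ‖φ‖_𝒞. -/

import Mathlib

open MeasureTheory Filter

noncomputable section

/-- The Hilbert space `ℓ²(ℕ; ℂ)`. -/
abbrev ell2 : Type := lp (fun _ : ℕ => ℂ) 2

/-- A matrix `h : ℕ → ℕ → ℂ` is of trace class if it admits a representation
`h i j = ∑ₖ xₖ(i) · conj (yₖ(j))` with `xₖ, yₖ ∈ ℓ²(ℕ; ℂ)` and `∑ₖ ‖xₖ‖₂·‖yₖ‖₂ < ∞`. -/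
def IsTraceClass (h : ℕ → ℕ → ℂ) : Prop :=
  ∃ x y : ℕ → ell2,
    (Summable fun k => ‖x k‖ * ‖y k‖) ∧
    ∀ i j, h i j = ∑' k, (x k : ℕ → ℂ) i * (starRingEnd ℂ) ((y k : ℕ → ℂ) j)

/-- The trace norm of a matrix: the infimum of `∑ₖ ‖xₖ‖₂·‖yₖ‖₂` over all representations
`h i j = ∑ₖ xₖ(i) · conj (yₖ(j))` as above. -/
def traceNorm (h : ℕ → ℕ → ℂ) : ℝ :=
  sInf { c : ℝ | ∃ x y : ℕ → ell2,
    (Summable fun k => ‖x k‖ * ‖y k‖) ∧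
    (∀ i j, h i j = ∑' k, (x k : ℕ → ℂ) i * (starRingEnd ℂ) ((y k : ℕ → ℂ) j)) ∧
    c = ∑' k, ‖x k‖ * ‖y k‖ }

/-- The Hankel matrix `h_φ(i,j) = φ(i+j) − φ(i+j+1)`. -/
def hankelH (φ : ℕ → ℂ) : ℕ → ℕ → ℂ := fun i j => φ (i+j) - φ (i+j+1)

/-- The Hankel matrix `k_φ(i,j) = φ(i+j+1) − φ(i+j+2)`. -/
def hankelK (φ : ℕ → ℂ) : ℕ → ℕ → ℂ := fun i j => φ (i+j+1) - φ (i+j+2)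

/-- The class `𝒞`: both Hankel matrices `h_φ` and `k_φ` are of trace class. -/
def MemC (φ : ℕ → ℂ) : Prop := IsTraceClass (hankelH φ) ∧ IsTraceClass (hankelK φ)

/-- The norm `‖φ‖_𝒞 = ‖h_φ‖₁ + ‖k_φ‖₁ + |c|`, where `c = lim_{n→∞} φ(n)`
(expressed via `limUnder`, which gives the limit whenever it exists). -/
def CNorm (φ : ℕ → ℂ) : ℝ :=
  traceNorm (hankelH φ) + traceNorm (hankelK φ) + ‖limUnder atTop φ‖

/-- The Hankel matrix `ĥ_φ(i,j) = φ(i+j) − φ(i+j+2)`. -/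
def hankelHat (φ : ℕ → ℂ) : ℕ → ℕ → ℂ := fun i j => φ (i+j) - φ (i+j+2)

/-- The class `𝒞′`: the Hankel matrix `ĥ_φ` is of trace class. -/
def MemCp (φ : ℕ → ℂ) : Prop := IsTraceClass (hankelHat φ)

/-- For `φ ∈ 𝒞′`, the constant `c₁` in the decomposition `φ(n) = c₁ + (−1)ⁿ c₂ + ψ(n)`,
`ψ(n) → 0`: it equals `(lim φ(2n) + lim φ(2n+1))/2`. -/
def cOne (φ : ℕ → ℂ) : ℂ :=
  (limUnder atTop (fun n => φ (2*n)) + limUnder atTop (fun n => φ (2*n+1))) / 2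

/-- For `φ ∈ 𝒞′`, the constant `c₂` in the decomposition `φ(n) = c₁ + (−1)ⁿ c₂ + ψ(n)`,
`ψ(n) → 0`: it equals `(lim φ(2n) − lim φ(2n+1))/2`. -/
def cTwo (φ : ℕ → ℂ) : ℂ :=
  (limUnder atTop (fun n => φ (2*n)) - limUnder atTop (fun n => φ (2*n+1))) / 2

/-- The norm `‖φ‖_{𝒞′} = |c₁| + |c₂| + ‖ĥ_φ‖₁`. -/
def CpNorm (φ : ℕ → ℂ) : ℝ := ‖cOne φ‖ + ‖cTwo φ‖ + traceNorm (hankelHat φ)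

/-!
After splitting rows and columns into even and odd indices, `ĥ_φ̃` becomes the block-diagonal
matrix `diag(h_φ, k_φ)`: the even–even block is `h_φ`, the odd–odd block is `k_φ`, and the mixed
blocks vanish because `φ̃` vanishes at odd arguments. Representations of the two blocks
concatenate into a representation of `ĥ_φ̃` whose cost is the sum of their costs; conversely a
representation of `ĥ_φ̃` restricts to representations of the blocks, and by Cauchy–Schwarz in `ℝ²`
the restricted costs add up to at most the original one. Hence `‖ĥ_φ̃‖₁ = ‖h_φ‖₁ + ‖k_φ‖₁`.
Finally `φ̃(2n) = φ(n)` and `φ̃(2n+1) = 0`, so `c₁ = c₂ = lim φ / 2`.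
-/

section Interleave

variable {α : Type*}

def interleave (f g : ℕ → α) (m : ℕ) : α := if Even m then f (m / 2) else g (m / 2)

@[simp] lemma interleave_two_mul (f g : ℕ → α) (n : ℕ) : interleave f g (2 * n) = f n := by
  simp [interleave]

@[simp] lemma interleave_two_mul_add_one (f g : ℕ → α) (n : ℕ) :
    interleave f g (2 * n + 1) = g n := by
  simp [interleave, Nat.add_div]

variable [AddCommGroup α] [UniformSpace α] [IsUniformAddGroup α] [CompleteSpace α]

lemma Summable.comp_two_mul {f : ℕ → α} (hf : Summable f) : Summable fun n => f (2 * n) :=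
  hf.comp_injective (mul_right_injective₀ two_ne_zero)

lemma Summable.comp_two_mul_add_one {f : ℕ → α} (hf : Summable f) :
    Summable fun n => f (2 * n + 1) :=
  hf.comp_injective ((add_left_injective 1).comp (mul_right_injective₀ two_ne_zero))

end Interleave

namespace ell2

lemma summable_norm_sq (x : ell2) : Summable fun i => ‖x i‖ ^ 2 := by
  simpa using (lp.memℓp x).summable (p := 2) (by simp)

lemma norm_sq_eq_tsum (x : ell2) : ‖x‖ ^ 2 = ∑' i, ‖x i‖ ^ 2 := by
  simpa using lp.norm_rpow_eq_tsum (p := 2) (by simp) x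

lemma memℓp_of_summable_norm_sq {f : ℕ → ℂ} (hf : Summable fun i => ‖f i‖ ^ 2) : Memℓp f 2 :=
  memℓp_gen (by simpa using hf)

def interleave (x u : ell2) : ell2 :=
  ⟨_root_.interleave (x : ℕ → ℂ) u, memℓp_of_summable_norm_sq <| by
    refine Summable.even_add_odd ?_ ?_ <;> simpa using summable_norm_sq _⟩

def evenPart (z : ell2) : ell2 :=
  ⟨fun n => z (2 * n), memℓp_of_summable_norm_sq (summable_norm_sq z).comp_two_mul⟩

def oddPart (z : ell2) : ell2 :=
  ⟨fun n => z (2 * n + 1), memℓp_of_summable_norm_sq (summable_norm_sq z).comp_two_mul_add_one⟩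

@[simp] lemma interleave_apply_two_mul (x u : ell2) (n : ℕ) : interleave x u (2 * n) = x n :=
  interleave_two_mul (x : ℕ → ℂ) u n

@[simp] lemma interleave_apply_two_mul_add_one (x u : ell2) (n : ℕ) :
    interleave x u (2 * n + 1) = u n :=
  interleave_two_mul_add_one (x : ℕ → ℂ) u n

@[simp] lemma evenPart_apply (z : ell2) (n : ℕ) : evenPart z n = z (2 * n) := rfl

@[simp] lemma oddPart_apply (z : ell2) (n : ℕ) : oddPart z n = z (2 * n + 1) := rfl

lemma norm_sq_eq_norm_evenPart_sq_add_norm_oddPart_sq (z : ell2) :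
    ‖z‖ ^ 2 = ‖evenPart z‖ ^ 2 + ‖oddPart z‖ ^ 2 := by
  simp only [norm_sq_eq_tsum, evenPart_apply, oddPart_apply]
  exact (tsum_even_add_odd (f := fun i => ‖z i‖ ^ 2) (summable_norm_sq z).comp_two_mul
    (summable_norm_sq z).comp_two_mul_add_one).symm

@[simp] lemma evenPart_interleave (x u : ell2) : evenPart (interleave x u) = x := by
  ext n; simp

@[simp] lemma oddPart_interleave (x u : ell2) : oddPart (interleave x u) = u := by
  ext n; simp

lemma norm_interleave_sq (x u : ell2) : ‖interleave x u‖ ^ 2 = ‖x‖ ^ 2 + ‖u‖ ^ 2 := by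
  rw [norm_sq_eq_norm_evenPart_sq_add_norm_oddPart_sq, evenPart_interleave, oddPart_interleave]

lemma norm_interleave_zero (x : ell2) : ‖interleave x 0‖ = ‖x‖ := by
  rw [← sq_eq_sq₀ (norm_nonneg _) (norm_nonneg _), norm_interleave_sq]
  simp

lemma norm_zero_interleave (u : ell2) : ‖interleave 0 u‖ = ‖u‖ := by
  rw [← sq_eq_sq₀ (norm_nonneg _) (norm_nonneg _), norm_interleave_sq]
  simp

lemma norm_evenPart_mul_add_norm_oddPart_mul_le (X Y : ell2) :
    ‖evenPart X‖ * ‖evenPart Y‖ + ‖oddPart X‖ * ‖oddPart Y‖ ≤ ‖X‖ * ‖Y‖ := by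
  have hX := norm_sq_eq_norm_evenPart_sq_add_norm_oddPart_sq X
  have hY := norm_sq_eq_norm_evenPart_sq_add_norm_oddPart_sq Y
  refine le_of_pow_le_pow_left₀ two_ne_zero (by positivity) ?_
  rw [mul_pow, hX, hY]
  -- Lagrange's identity: `(a² + c²)(b² + d²) - (ab + cd)² = (ad - cb)²`
  nlinarith [sq_nonneg (‖evenPart X‖ * ‖oddPart Y‖ - ‖oddPart X‖ * ‖evenPart Y‖)]

section Restrict

variable {X Y : ℕ → ell2} (hs : Summable fun k => ‖X k‖ * ‖Y k‖)
include hs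

lemma summable_norm_evenPart_mul : Summable fun k => ‖evenPart (X k)‖ * ‖evenPart (Y k)‖ :=
  hs.of_nonneg_of_le (fun k => by positivity) fun k =>
    (le_add_of_nonneg_right (by positivity)).trans (norm_evenPart_mul_add_norm_oddPart_mul_le _ _)

lemma summable_norm_oddPart_mul : Summable fun k => ‖oddPart (X k)‖ * ‖oddPart (Y k)‖ :=
  hs.of_nonneg_of_le (fun k => by positivity) fun k =>
    (le_add_of_nonneg_left (by positivity)).trans (norm_evenPart_mul_add_norm_oddPart_mul_le _ _)

lemma tsum_norm_evenPart_mul_add_tsum_norm_oddPart_mul_le :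
    (∑' k, ‖evenPart (X k)‖ * ‖evenPart (Y k)‖) + ∑' k, ‖oddPart (X k)‖ * ‖oddPart (Y k)‖ ≤
      ∑' k, ‖X k‖ * ‖Y k‖ := by
  rw [← (summable_norm_evenPart_mul hs).tsum_add (summable_norm_oddPart_mul hs)]
  exact ((summable_norm_evenPart_mul hs).add (summable_norm_oddPart_mul hs)).tsum_le_tsum
    (fun k => norm_evenPart_mul_add_norm_oddPart_mul_le _ _) hs

end Restrict

def interleaveBlocks (x u : ℕ → ell2) : ℕ → ell2 :=
  _root_.interleave (fun k => interleave (x k) 0) (fun k => interleave 0 (u k))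

section Concat

variable {x y u v : ℕ → ell2} (hxy : Summable fun k => ‖x k‖ * ‖y k‖)
  (huv : Summable fun k => ‖u k‖ * ‖v k‖)
include hxy huv

lemma summable_norm_interleaveBlocks_mul :
    Summable fun k => ‖interleaveBlocks x u k‖ * ‖interleaveBlocks y v k‖ :=
  .even_add_odd (by simpa [interleaveBlocks, norm_interleave_zero] using hxy)
    (by simpa [interleaveBlocks, norm_zero_interleave] using huv)

lemma tsum_norm_interleaveBlocks_mul :
    ∑' k, ‖interleaveBlocks x u k‖ * ‖interleaveBlocks y v k‖ =
      (∑' k, ‖x k‖ * ‖y k‖) + ∑' k, ‖u k‖ * ‖v k‖ := by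
  have hs := summable_norm_interleaveBlocks_mul hxy huv
  rw [← tsum_even_add_odd (f := fun k => ‖interleaveBlocks x u k‖ * ‖interleaveBlocks y v k‖)
    hs.comp_two_mul hs.comp_two_mul_add_one]
  simp [interleaveBlocks, norm_interleave_zero, norm_zero_interleave]

end Concat

end ell2

def IsTraceRep (h : ℕ → ℕ → ℂ) (x y : ℕ → ell2) : Prop :=
  (Summable fun k => ‖x k‖ * ‖y k‖) ∧
    ∀ i j, h i j = ∑' k, (x k : ℕ → ℂ) i * (starRingEnd ℂ) ((y k : ℕ → ℂ) j)

lemma traceNorm_le {h : ℕ → ℕ → ℂ} {x y : ℕ → ell2} (hr : IsTraceRep h x y) :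
    traceNorm h ≤ ∑' k, ‖x k‖ * ‖y k‖ :=
  csInf_le ⟨0, by rintro _ ⟨x, y, -, -, rfl⟩; positivity⟩ ⟨x, y, hr.1, hr.2, rfl⟩

lemma le_traceNorm {h : ℕ → ℕ → ℂ} {c : ℝ} (hh : IsTraceClass h)
    (H : ∀ x y, IsTraceRep h x y → c ≤ ∑' k, ‖x k‖ * ‖y k‖) : c ≤ traceNorm h := by
  obtain ⟨x, y, hr⟩ := hh
  exact le_csInf ⟨_, x, y, hr.1, hr.2, rfl⟩ (by rintro _ ⟨x, y, hs, he, rfl⟩; exact H x y ⟨hs, he⟩)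

lemma summable_apply_mul_conj_apply {x y : ℕ → ell2} (hs : Summable fun k => ‖x k‖ * ‖y k‖)
    (i j : ℕ) : Summable fun k => (x k : ℕ → ℂ) i * (starRingEnd ℂ) ((y k : ℕ → ℂ) j) := by
  refine .of_norm (hs.of_nonneg_of_le (fun k => norm_nonneg _) fun k => ?_)
  rw [norm_mul, RCLike.norm_conj]
  exact mul_le_mul (lp.norm_apply_le_norm two_ne_zero _ i) (lp.norm_apply_le_norm two_ne_zero _ j)
    (norm_nonneg _) (norm_nonneg _)

structure IsEvenOddBlockDiag (h A B : ℕ → ℕ → ℂ) : Prop where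
  even_even : ∀ a b, h (2 * a) (2 * b) = A a b
  odd_odd : ∀ a b, h (2 * a + 1) (2 * b + 1) = B a b
  even_odd : ∀ a b, h (2 * a) (2 * b + 1) = 0
  odd_even : ∀ a b, h (2 * a + 1) (2 * b) = 0

namespace IsEvenOddBlockDiag

open ell2

variable {h A B : ℕ → ℕ → ℂ} (hd : IsEvenOddBlockDiag h A B)
include hd

lemma isTraceRep_evenPart {X Y : ℕ → ell2} (hr : IsTraceRep h X Y) :
    IsTraceRep A (fun k => evenPart (X k)) (fun k => evenPart (Y k)) :=
  ⟨summable_norm_evenPart_mul hr.1, fun a b => by rw [← hd.even_even, hr.2]; rfl⟩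

lemma isTraceRep_oddPart {X Y : ℕ → ell2} (hr : IsTraceRep h X Y) :
    IsTraceRep B (fun k => oddPart (X k)) (fun k => oddPart (Y k)) :=
  ⟨summable_norm_oddPart_mul hr.1, fun a b => by rw [← hd.odd_odd, hr.2]; rfl⟩

lemma isTraceRep_interleaveBlocks {x y u v : ℕ → ell2} (hA : IsTraceRep A x y)
    (hB : IsTraceRep B u v) : IsTraceRep h (interleaveBlocks x u) (interleaveBlocks y v) := by
  have hs := summable_norm_interleaveBlocks_mul hA.1 hB.1
  refine ⟨hs, fun i j => ?_⟩
  have he := summable_apply_mul_conj_apply hs i j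
  rw [← tsum_even_add_odd (f := fun k => (interleaveBlocks x u k : ℕ → ℂ) i *
    (starRingEnd ℂ) ((interleaveBlocks y v k : ℕ → ℂ) j)) he.comp_two_mul he.comp_two_mul_add_one]
  rcases Nat.even_or_odd' i with ⟨a, rfl | rfl⟩ <;> rcases Nat.even_or_odd' j with ⟨b, rfl | rfl⟩ <;>
    simp [interleaveBlocks, hd.even_even, hd.odd_odd, hd.even_odd, hd.odd_even, hA.2, hB.2]

theorem isTraceClass_iff : IsTraceClass h ↔ IsTraceClass A ∧ IsTraceClass B := by
  constructor
  · rintro ⟨X, Y, hr⟩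
    exact ⟨⟨_, _, hd.isTraceRep_evenPart hr⟩, ⟨_, _, hd.isTraceRep_oddPart hr⟩⟩
  · rintro ⟨⟨x, y, hA⟩, ⟨u, v, hB⟩⟩
    exact ⟨_, _, hd.isTraceRep_interleaveBlocks hA hB⟩

theorem traceNorm_eq (hA : IsTraceClass A) (hB : IsTraceClass B) :
    traceNorm h = traceNorm A + traceNorm B := by
  refine le_antisymm ?_ (le_traceNorm (hd.isTraceClass_iff.2 ⟨hA, hB⟩) fun X Y hr => ?_)
  · rw [← sub_le_iff_le_add]
    refine le_traceNorm hA fun x y hA' => ?_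
    rw [sub_le_iff_le_add', ← sub_le_iff_le_add]
    refine le_traceNorm hB fun u v hB' => ?_
    rw [sub_le_iff_le_add', ← tsum_norm_interleaveBlocks_mul hA'.1 hB'.1]
    exact traceNorm_le (hd.isTraceRep_interleaveBlocks hA' hB')
  · exact (add_le_add (traceNorm_le (hd.isTraceRep_evenPart hr))
      (traceNorm_le (hd.isTraceRep_oddPart hr))).trans
      (tsum_norm_evenPart_mul_add_tsum_norm_oddPart_mul_le hr.1)

end IsEvenOddBlockDiag

lemma isEvenOddBlockDiag_hankelHat {φ φt : ℕ → ℂ} (heven : ∀ n, φt (2 * n) = φ n)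
    (hodd : ∀ n, φt (2 * n + 1) = 0) :
    IsEvenOddBlockDiag (hankelHat φt) (hankelH φ) (hankelK φ) where
  even_even a b := by
    simp only [hankelHat, hankelH, ← heven]
    ring_nf
  odd_odd a b := by
    simp only [hankelHat, hankelK, ← heven]
    ring_nf
  even_odd a b := by
    simp only [hankelHat]
    rw [show 2 * a + (2 * b + 1) = 2 * (a + b) + 1 by ring,
      show 2 * (a + b) + 1 + 2 = 2 * (a + b + 1) + 1 by ring, hodd, hodd, sub_zero]
  odd_even a b := by
    simp only [hankelHat]
    rw [show 2 * a + 1 + 2 * b = 2 * (a + b) + 1 by ring,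
      show 2 * (a + b) + 1 + 2 = 2 * (a + b + 1) + 1 by ring, hodd, hodd, sub_zero]

lemma norm_cOne_add_norm_cTwo {φ φt : ℕ → ℂ} (heven : ∀ n, φt (2 * n) = φ n)
    (hodd : ∀ n, φt (2 * n + 1) = 0) : ‖cOne φt‖ + ‖cTwo φt‖ = ‖limUnder atTop φ‖ := by
  have h0 : limUnder atTop (fun n => φt (2 * n + 1)) = 0 := by
    simp only [hodd]
    exact tendsto_const_nhds.limUnder_eq
  simp only [cOne, cTwo, heven, h0, add_zero, sub_zero, norm_div, Complex.norm_two]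
  ring

/-- For the even extension `φ̃` of `φ` (with `φ̃(2n) = φ(n)`,
`φ̃(2n+1) = 0`): `φ ∈ 𝒞` if and only if `φ̃ ∈ 𝒞′`, and in that case
`‖φ̃‖_{𝒞′} = ‖φ‖_𝒞`. -/
theorem stmt14 (φ : ℕ → ℂ) (φt : ℕ → ℂ)
    (heven : ∀ n : ℕ, φt (2 * n) = φ n)
    (hodd : ∀ n : ℕ, φt (2 * n + 1) = 0) :
    (MemC φ ↔ MemCp φt) ∧ (MemC φ → CpNorm φt = CNorm φ) := by
  have hd := isEvenOddBlockDiag_hankelHat heven hodd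
  refine ⟨hd.isTraceClass_iff.symm, fun hC => ?_⟩
  rw [CpNorm, CNorm, hd.traceNorm_eq hC.1 hC.2, ← norm_cOne_add_norm_cTwo heven hodd]
  ring
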